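/- Main theorem, converse direction: for events E1, H1, E2, H2, E3, H3 with P(Hi) > 0 for i = 1, 2, 3, if x123 = x12 (equivalently, the prevision μ of the iterated conditional equals 1) and P(E1|H1) = P(E2|H2) = 1, then P(E3|H3) = 1. -/

import Mathlib

open MeasureTheory Set
open scoped Classical

noncomputable section

variable {Ω : Type*} [MeasurableSpace Ω]

/-- Indicator (with values in `ℝ`) of a set. -/
def ind (A : Set Ω) : Ω → ℝ := A.indicator 1

/-- Conditional probability `P(A|H) = P(A ∩ H)/P(H)`. -/
def condProb (P : Measure Ω) (A H : Set Ω) : ℝ :=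
  (P (A ∩ H)).toReal / (P H).toReal

/-- The (indicator of the) conditional event `A|H`,
`⟦A|H⟧ = 1_{A∩H} + P(A|H)·1_{Hᶜ}`. -/
def condEvent (P : Measure Ω) (A H : Set Ω) : Ω → ℝ :=
  fun ω => ind (A ∩ H) ω + condProb P A H * ind Hᶜ ω

/-- The prevision `z` of the conjunction `(A|H) ∧ (B|K)`:
`z = E[min(⟦A|H⟧, ⟦B|K⟧)·1_{H∪K}]/P(H∪K)`. -/
def conjPrev (P : Measure Ω) (A H B K : Set Ω) : ℝ :=
  (∫ ω, min (condEvent P A H ω) (condEvent P B K ω) * ind (H ∪ K) ω ∂P) /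
    (P (H ∪ K)).toReal

/-- The conjunction `⟦(A|H) ∧ (B|K)⟧ = min(⟦A|H⟧, ⟦B|K⟧)·1_{H∪K} + z·1_{(H∪K)ᶜ}`. -/
def conjCE (P : Measure Ω) (A H B K : Set Ω) : Ω → ℝ :=
  fun ω => min (condEvent P A H ω) (condEvent P B K ω) * ind (H ∪ K) ω
    + conjPrev P A H B K * ind (H ∪ K)ᶜ ω

/-- The iterated conditional `⟦(B|K)|(A|H)⟧ = ⟦(A|H)∧(B|K)⟧ + μ·(1 − ⟦A|H⟧)`,
with `μ = z / P(A|H)`. -/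
def iterCond (P : Measure Ω) (A H B K : Set Ω) : Ω → ℝ :=
  fun ω => conjCE P A H B K ω +
    (conjPrev P A H B K / condProb P A H) * (1 - condEvent P A H ω)

/-- Goodman–Nguyen logical implication between conditional events:
`A|H ⊑ B|K` iff `A∩H ⊆ B∩K` and `Bᶜ∩K ⊆ Aᶜ∩H`. -/
def GNle (A H B K : Set Ω) : Prop := A ∩ H ⊆ B ∩ K ∧ Bᶜ ∩ K ⊆ Aᶜ ∩ H

/-- Triple conjunction `⟦(E1|H1)∧(E2|H2)∧(E3|H3)⟧`, defined piecewise, except that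
on `H1ᶜ∩H2ᶜ∩H3ᶜ` it is set to `0` (it is irrelevant there for computing `x123`). -/
def c3base (P : Measure Ω) (E1 H1 E2 H2 E3 H3 : Set Ω) : Ω → ℝ := fun ω =>
  if ω ∈ E1 ∩ H1 ∩ (E2 ∩ H2) ∩ (E3 ∩ H3) then 1
  else if ω ∈ (E1ᶜ ∩ H1) ∪ (E2ᶜ ∩ H2) ∪ (E3ᶜ ∩ H3) then 0
  else if ω ∈ H1ᶜ ∩ (E2 ∩ H2) ∩ (E3 ∩ H3) then condProb P E1 H1
  else if ω ∈ H2ᶜ ∩ (E1 ∩ H1) ∩ (E3 ∩ H3) then condProb P E2 H2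
  else if ω ∈ H3ᶜ ∩ (E1 ∩ H1) ∩ (E2 ∩ H2) then condProb P E3 H3
  else if ω ∈ H1ᶜ ∩ H2ᶜ ∩ (E3 ∩ H3) then conjPrev P E1 H1 E2 H2
  else if ω ∈ H1ᶜ ∩ H3ᶜ ∩ (E2 ∩ H2) then conjPrev P E1 H1 E3 H3
  else if ω ∈ H2ᶜ ∩ H3ᶜ ∩ (E1 ∩ H1) then conjPrev P E2 H2 E3 H3
  else 0

/-- The prevision `x123 = E[C3·1_{H1∪H2∪H3}]/P(H1∪H2∪H3)` of the triple conjunction. -/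
def x123 (P : Measure Ω) (E1 H1 E2 H2 E3 H3 : Set Ω) : ℝ :=
  (∫ ω, c3base P E1 H1 E2 H2 E3 H3 ω * ind (H1 ∪ H2 ∪ H3) ω ∂P) /
    (P (H1 ∪ H2 ∪ H3)).toReal

/-- The triple conjunction `C3 = ⟦(E1|H1)∧(E2|H2)∧(E3|H3)⟧`, equal to `x123` on
`H1ᶜ∩H2ᶜ∩H3ᶜ` and given piecewise by `c3base` elsewhere. -/
def c3 (P : Measure Ω) (E1 H1 E2 H2 E3 H3 : Set Ω) : Ω → ℝ := fun ω =>
  if ω ∈ H1ᶜ ∩ H2ᶜ ∩ H3ᶜ then x123 P E1 H1 E2 H2 E3 H3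
  else c3base P E1 H1 E2 H2 E3 H3 ω

/-- The iterated conditional `⟦(E3|H3)|((E1|H1)∧(E2|H2))⟧ = C3 + μ·(1 − C12)`,
where `μ = x123/x12` and `C12 = ⟦(E1|H1)∧(E2|H2)⟧`. -/
def iter3 (P : Measure Ω) (E1 H1 E2 H2 E3 H3 : Set Ω) : Ω → ℝ := fun ω =>
  c3 P E1 H1 E2 H2 E3 H3 ω +
    (x123 P E1 H1 E2 H2 E3 H3 / conjPrev P E1 H1 E2 H2) *
      (1 - conjCE P E1 H1 E2 H2 ω)

/-!
Since `P(E1|H1) = P(E2|H2) = 1`, the events `E1ᶜ ∩ H1` and `E2ᶜ ∩ H2` are null, so both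
conditional events equal `1` almost surely and `x12 = 1`; hence `x123 = 1`. The triple
conjunction takes values in `[0, 1]` and vanishes on `E3ᶜ ∩ H3 ⊆ H1 ∪ H2 ∪ H3`, so its mean
over `H1 ∪ H2 ∪ H3` can only be `1` if `E3ᶜ ∩ H3` is null, i.e. if `P(E3|H3) = 1`.
-/

/-- As `b / 0 = 0`, a quotient equal to `1` has a nonzero denominator. -/
lemma ne_zero_and_eq_of_div_eq_one {G₀ : Type*} [GroupWithZero G₀] {a b : G₀} (h : a / b = 1) :
    b ≠ 0 ∧ a = b :=
  have hb : b ≠ 0 := (div_ne_zero_iff.mp (h ▸ one_ne_zero)).2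
  ⟨hb, (div_eq_one_iff_eq hb).mp h⟩

section ConditionalEvents

variable {P : Measure Ω} {A H B K : Set Ω}

lemma ind_nonneg {α : Type*} (A : Set α) (a : α) : 0 ≤ ind A a := by
  unfold ind; by_cases h : a ∈ A <;> simp [h]

lemma ind_le_one {α : Type*} (A : Set α) (a : α) : ind A a ≤ 1 := by
  unfold ind; by_cases h : a ∈ A <;> simp [h]

lemma integral_ind (hA : MeasurableSet A) : ∫ ω, ind A ω ∂P = P.real A :=
  integral_indicator_one hA

lemma integrable_ind [IsFiniteMeasure P] (hA : MeasurableSet A) : Integrable (ind A) P :=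
  (integrable_const 1).indicator hA

lemma condProb_nonneg (P : Measure Ω) (A H : Set Ω) : 0 ≤ condProb P A H := by
  unfold condProb; positivity

lemma condProb_le_one [IsFiniteMeasure P] (A H : Set Ω) : condProb P A H ≤ 1 :=
  div_le_one_of_le₀ (measureReal_mono inter_subset_right) measureReal_nonneg

lemma measure_ne_zero_of_condProb_eq_one (hx : condProb P A H = 1) : P H ≠ 0 := by
  rintro hH
  simp [condProb, hH] at hx

lemma measure_compl_inter_eq_zero_of_condProb_eq_one [IsFiniteMeasure P]
    (hA : MeasurableSet A) (hx : condProb P A H = 1) : P (Aᶜ ∩ H) = 0 := by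
  have hsplit : P.real (H \ A) + P.real (H ∩ A) = P.real H := measureReal_sdiff_add_inter hA
  have hAH : P.real (A ∩ H) = P.real H := (ne_zero_and_eq_of_div_eq_one hx).2
  rw [inter_comm H A, hAH, add_eq_right] at hsplit
  rwa [inter_comm, ← sdiff_eq, ← measureReal_eq_zero_iff]

lemma condProb_eq_one_of_measure_compl_inter_eq_zero [IsFiniteMeasure P] (hH : P H ≠ 0)
    (h : P (Aᶜ ∩ H) = 0) : condProb P A H = 1 := by
  have hAH : P (A ∩ H) = P H := by
    rw [inter_comm]
    exact measure_inter_conull' (by rwa [sdiff_eq, inter_comm])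
  rw [condProb, hAH]
  exact div_self (ENNReal.toReal_ne_zero.mpr ⟨hH, measure_ne_top P H⟩)

lemma condEvent_nonneg (P : Measure Ω) (A H : Set Ω) (ω : Ω) : 0 ≤ condEvent P A H ω :=
  add_nonneg (ind_nonneg _ _) (mul_nonneg (condProb_nonneg _ _ _) (ind_nonneg _ _))

lemma condEvent_le_one [IsFiniteMeasure P] (A H : Set Ω) (ω : Ω) : condEvent P A H ω ≤ 1 := by
  unfold condEvent ind
  by_cases hH : ω ∈ H
  · by_cases hA : ω ∈ A <;> simp [hA, hH]
  · simpa [hH] using condProb_le_one (P := P) A H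

lemma condEvent_eq_one_of_notMem (hx : condProb P A H = 1) {ω : Ω} (hω : ω ∉ Aᶜ ∩ H) :
    condEvent P A H ω = 1 := by
  unfold condEvent ind
  by_cases hH : ω ∈ H
  · have hA : ω ∈ A := by_contra fun hA => hω ⟨hA, hH⟩
    simp [hA, hH]
  · simp [hH, hx]

lemma condEvent_ae_eq_one [IsFiniteMeasure P] (hA : MeasurableSet A) (hx : condProb P A H = 1) :
    condEvent P A H =ᵐ[P] 1 := by
  filter_upwards [measure_eq_zero_iff_ae_notMem.mp
    (measure_compl_inter_eq_zero_of_condProb_eq_one hA hx)] with ω hω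
  exact condEvent_eq_one_of_notMem hx hω

lemma min_condEvent_mul_ind_nonneg (P : Measure Ω) (A H B K : Set Ω) (ω : Ω) :
    0 ≤ min (condEvent P A H ω) (condEvent P B K ω) * ind (H ∪ K) ω :=
  mul_nonneg (le_min (condEvent_nonneg _ _ _ _) (condEvent_nonneg _ _ _ _)) (ind_nonneg _ _)

lemma conjPrev_nonneg (P : Measure Ω) (A H B K : Set Ω) : 0 ≤ conjPrev P A H B K :=
  div_nonneg (integral_nonneg (min_condEvent_mul_ind_nonneg P A H B K)) ENNReal.toReal_nonneg

lemma conjPrev_le_one [IsFiniteMeasure P] (hH : MeasurableSet H) (hK : MeasurableSet K) :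
    conjPrev P A H B K ≤ 1 := by
  refine div_le_one_of_le₀ ?_ ENNReal.toReal_nonneg
  rw [← measureReal_def, ← integral_ind (hH.union hK)]
  exact integral_mono_of_nonneg (ae_of_all _ (min_condEvent_mul_ind_nonneg P A H B K))
    (integrable_ind (hH.union hK)) (ae_of_all _ fun _ =>
      mul_le_of_le_one_left (ind_nonneg _ _) (min_le_of_left_le (condEvent_le_one _ _ _)))

lemma conjPrev_eq_one_of_condProb_eq_one [IsFiniteMeasure P] (hA : MeasurableSet A)
    (hH : MeasurableSet H) (hB : MeasurableSet B) (hK : MeasurableSet K)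
    (hxA : condProb P A H = 1) (hxB : condProb P B K = 1) : conjPrev P A H B K = 1 := by
  have hint : ∫ ω, min (condEvent P A H ω) (condEvent P B K ω) * ind (H ∪ K) ω ∂P =
      P.real (H ∪ K) := by
    rw [← integral_ind (hH.union hK)]
    refine integral_congr_ae ?_
    filter_upwards [condEvent_ae_eq_one hA hxA, condEvent_ae_eq_one hB hxB] with ω hωA hωB
    simp [hωA, hωB]
  have hHK : P (H ∪ K) ≠ 0 :=
    fun h => measure_ne_zero_of_condProb_eq_one hxA (measure_mono_null subset_union_left h)
  rw [conjPrev, hint]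
  exact div_self (ENNReal.toReal_ne_zero.mpr ⟨hHK, measure_ne_top P _⟩)

end ConditionalEvents

/-- The integrand `f * 1_S` is dominated by `1_S - 1_T`. -/
lemma measure_eq_zero_of_integral_mul_ind_eq {P : Measure Ω} [IsFiniteMeasure P] {f : Ω → ℝ}
    {S T : Set Ω} (hS : MeasurableSet S) (hT : MeasurableSet T) (hTS : T ⊆ S)
    (hf0 : ∀ ω, 0 ≤ f ω) (hf1 : ∀ ω, f ω ≤ 1) (hfT : ∀ ω ∈ T, f ω = 0)
    (hint : ∫ ω, f ω * ind S ω ∂P = P.real S) : P T = 0 := by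
  have hbound : ∀ ω, f ω * ind S ω ≤ ind S ω - ind T ω := by
    intro ω
    by_cases hωT : ω ∈ T
    · simp [ind, hfT ω hωT, hωT, hTS hωT]
    · simpa [ind, hωT] using mul_le_of_le_one_left (ind_nonneg S ω) (hf1 ω)
  have hle : P.real S ≤ P.real S - P.real T :=
    calc P.real S = ∫ ω, f ω * ind S ω ∂P := hint.symm
      _ ≤ ∫ ω, (ind S ω - ind T ω) ∂P :=
        integral_mono_of_nonneg (ae_of_all _ fun ω => mul_nonneg (hf0 ω) (ind_nonneg S ω))
          ((integrable_ind hS).sub (integrable_ind hT)) (ae_of_all _ hbound)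
      _ = P.real S - P.real T := by
        rw [integral_sub (integrable_ind hS) (integrable_ind hT), integral_ind hS,
          integral_ind hT]
  exact (measureReal_eq_zero_iff (measure_ne_top P T)).mp
    (le_antisymm (by linarith) measureReal_nonneg)

section TripleConjunction

variable {P : Measure Ω} {E1 H1 E2 H2 E3 H3 : Set Ω}

lemma c3base_nonneg (P : Measure Ω) (E1 H1 E2 H2 E3 H3 : Set Ω) (ω : Ω) :
    0 ≤ c3base P E1 H1 E2 H2 E3 H3 ω := by
  unfold c3base
  split_ifs <;> first
    | exact zero_le_one
    | exact le_rfl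
    | exact condProb_nonneg _ _ _
    | exact conjPrev_nonneg _ _ _ _ _

lemma c3base_le_one [IsFiniteMeasure P] (hH1 : MeasurableSet H1) (hH2 : MeasurableSet H2)
    (hH3 : MeasurableSet H3) (ω : Ω) : c3base P E1 H1 E2 H2 E3 H3 ω ≤ 1 := by
  unfold c3base
  split_ifs <;> first
    | exact le_rfl
    | exact zero_le_one
    | exact condProb_le_one _ _
    | exact conjPrev_le_one hH1 hH2
    | exact conjPrev_le_one hH1 hH3
    | exact conjPrev_le_one hH2 hH3

lemma c3base_eq_zero_of_mem {ω : Ω} (hω : ω ∈ E3ᶜ ∩ H3) : c3base P E1 H1 E2 H2 E3 H3 ω = 0 := by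
  rw [c3base, if_neg fun h => hω.1 h.2.1, if_pos (mem_union_right _ hω)]

lemma measure_compl_inter_eq_zero_of_x123_eq_one [IsFiniteMeasure P] (hH1 : MeasurableSet H1)
    (hH2 : MeasurableSet H2) (hE3 : MeasurableSet E3) (hH3 : MeasurableSet H3)
    (hx : x123 P E1 H1 E2 H2 E3 H3 = 1) : P (E3ᶜ ∩ H3) = 0 :=
  measure_eq_zero_of_integral_mul_ind_eq ((hH1.union hH2).union hH3) (hE3.compl.inter hH3)
    (fun _ hω => Or.inr hω.2) (c3base_nonneg P E1 H1 E2 H2 E3 H3) (c3base_le_one hH1 hH2 hH3)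
    (fun _ hω => c3base_eq_zero_of_mem hω) (ne_zero_and_eq_of_div_eq_one hx).2

end TripleConjunction

theorem main_converse_general (P : Measure Ω) [IsProbabilityMeasure P]
    (E1 H1 E2 H2 E3 H3 : Set Ω)
    (hE1 : MeasurableSet E1) (hH1 : MeasurableSet H1)
    (hE2 : MeasurableSet E2) (hH2 : MeasurableSet H2)
    (hE3 : MeasurableSet E3) (hH3 : MeasurableSet H3)
    (h3 : 0 < P H3)
    (h12 : x123 P E1 H1 E2 H2 E3 H3 = conjPrev P E1 H1 E2 H2)
    (hx1 : condProb P E1 H1 = 1) (hx2 : condProb P E2 H2 = 1) :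
    condProb P E3 H3 = 1 := by
  have hx12 : conjPrev P E1 H1 E2 H2 = 1 :=
    conjPrev_eq_one_of_condProb_eq_one hE1 hH1 hE2 hH2 hx1 hx2
  have hnull : P (E3ᶜ ∩ H3) = 0 :=
    measure_compl_inter_eq_zero_of_x123_eq_one hH1 hH2 hE3 hH3 (h12.trans hx12)
  exact condProb_eq_one_of_measure_compl_inter_eq_zero h3.ne' hnull

/-- Main theorem, converse direction: if `x123 = x12` (equivalently, the
prevision `μ` of the iterated conditional equals `1`) and
`P(E1|H1) = P(E2|H2) = 1`, then `P(E3|H3) = 1`. -/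
theorem main_converse (P : Measure Ω) [IsProbabilityMeasure P]
    (E1 H1 E2 H2 E3 H3 : Set Ω)
    (hE1 : MeasurableSet E1) (hH1 : MeasurableSet H1)
    (hE2 : MeasurableSet E2) (hH2 : MeasurableSet H2)
    (hE3 : MeasurableSet E3) (hH3 : MeasurableSet H3)
    (h1 : 0 < P H1) (h2 : 0 < P H2) (h3 : 0 < P H3)
    (h12 : x123 P E1 H1 E2 H2 E3 H3 = conjPrev P E1 H1 E2 H2)
    (hx1 : condProb P E1 H1 = 1) (hx2 : condProb P E2 H2 = 1) :
    condProb P E3 H3 = 1 :=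
  main_converse_general P E1 H1 E2 H2 E3 H3 hE1 hH1 hE2 hH2 hE3 hH3 h3 h12 hx1 hx2

end
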